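/- Suppose φ is an analytic self-map of the unit disk D, u ∈ H(D), 0<p<∞ and ω is normal on [0,1). Then lim_{|z|→1} (1−|z|²)|u'(z)| / (ω(|φ(z)|)(1−|φ(z)|²)^{1/p}) = 0 if and only if both: lim_{|φ(z)|→1} (1−|z|²)|u'(z)| / (ω(|φ(z)|)(1−|φ(z)|²)^{1/p}) = 0 and u ∈ B₀. -/

import Mathlib

open MeasureTheory Complex Filter

noncomputable section

/-- The open unit disk in the complex plane. -/
def unitDisk : Set ℂ := Metric.ball 0 1

/-- `ω` is a normal function with parameters `0 < s < t`:
`ω` is positive and continuous on `[0,1)`, `ω r / (1-r)^s` decreases to `0`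
and `ω r / (1-r)^t` increases to `∞` as `r → 1⁻`. -/
def IsNormalWith (ω : ℝ → ℝ) (s t : ℝ) : Prop :=
  0 < s ∧ s < t ∧
  ContinuousOn ω (Set.Ico 0 1) ∧
  (∀ r ∈ Set.Ico (0:ℝ) 1, 0 < ω r) ∧
  (∀ r₁ ∈ Set.Ico (0:ℝ) 1, ∀ r₂ ∈ Set.Ico (0:ℝ) 1, r₁ ≤ r₂ →
    ω r₂ / (1 - r₂) ^ s ≤ ω r₁ / (1 - r₁) ^ s) ∧
  Filter.Tendsto (fun r => ω r / (1 - r) ^ s) (nhdsWithin 1 (Set.Ico 0 1)) (nhds 0) ∧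
  (∀ r₁ ∈ Set.Ico (0:ℝ) 1, ∀ r₂ ∈ Set.Ico (0:ℝ) 1, r₁ ≤ r₂ →
    ω r₁ / (1 - r₁) ^ t ≤ ω r₂ / (1 - r₂) ^ t) ∧
  Filter.Tendsto (fun r => ω r / (1 - r) ^ t) (nhdsWithin 1 (Set.Ico 0 1)) Filter.atTop

/-- `ω` is a normal function. -/
def IsNormal (ω : ℝ → ℝ) : Prop := ∃ s t : ℝ, IsNormalWith ω s t

/-- `φ` is an analytic self-map of the unit disk. -/
def IsAnalyticSelfMap (φ : ℂ → ℂ) : Prop :=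
  DifferentiableOn ℂ φ unitDisk ∧ Set.MapsTo φ unitDisk unitDisk

/-- The (unnormalized) integral `∫_D |f|^p ω(|z|)^p/(1-|z|) dA`. -/
def bergmanIntegral (p : ℝ) (ω : ℝ → ℝ) (f : ℂ → ℂ) : ENNReal :=
  ∫⁻ z in unitDisk,
    ENNReal.ofReal (‖f z‖ ^ p * ω (‖z‖) ^ p / (1 - ‖z‖))

/-- Membership in the Bergman-type space `H(p,p,ω)`. -/
def MemBergmanType (p : ℝ) (ω : ℝ → ℝ) (f : ℂ → ℂ) : Prop :=
  DifferentiableOn ℂ f unitDisk ∧ bergmanIntegral p ω f < ⊤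

/-- The norm on `H(p,p,ω)` (the factor `π⁻¹` normalizes the area measure so `A(D) = 1`). -/
def bergmanTypeNorm (p : ℝ) (ω : ℝ → ℝ) (f : ℂ → ℂ) : ℝ :=
  (Real.pi⁻¹ * (bergmanIntegral p ω f).toReal) ^ (1 / p)

/-- The (unnormalized) integral `∫_D |f|^p dA`. -/
def apIntegral (p : ℝ) (f : ℂ → ℂ) : ENNReal :=
  ∫⁻ z in unitDisk, ENNReal.ofReal (‖f z‖ ^ p)

/-- Membership in the Bergman space `A^p`. -/
def MemAp (p : ℝ) (f : ℂ → ℂ) : Prop :=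
  DifferentiableOn ℂ f unitDisk ∧ apIntegral p f < ⊤

/-- The norm on `A^p` (with the normalized area measure). -/
def apNorm (p : ℝ) (f : ℂ → ℂ) : ℝ :=
  (Real.pi⁻¹ * (apIntegral p f).toReal) ^ (1 / p)

/-- Membership in the Bloch space `B`. -/
def MemBloch (f : ℂ → ℂ) : Prop :=
  DifferentiableOn ℂ f unitDisk ∧
  ∃ M : ℝ, ∀ z ∈ unitDisk, (1 - ‖z‖ ^ 2) * ‖deriv f z‖ ≤ M

/-- The Bloch norm `‖f‖_B = |f(0)| + sup_{z∈D} (1-|z|²)|f'(z)|`. -/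
def blochNorm (f : ℂ → ℂ) : ℝ :=
  ‖f 0‖ +
    ⨆ z : unitDisk, (1 - ‖z.1‖ ^ 2) * ‖deriv f z.1‖

/-- Membership in the little Bloch space `B₀`. -/
def MemLittleBloch (f : ℂ → ℂ) : Prop :=
  MemBloch f ∧
  ∀ ε : ℝ, 0 < ε → ∃ r ∈ Set.Ioo (0:ℝ) 1, ∀ z ∈ unitDisk,
    r < ‖z‖ → (1 - ‖z‖ ^ 2) * ‖deriv f z‖ < ε

/-- The weighted composition operator `uC_φ f = u ⬝ (f ∘ φ)`. -/
def wComp (u φ : ℂ → ℂ) (f : ℂ → ℂ) : ℂ → ℂ := fun z => u z * f (φ z)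

/-- The composition operator `C_φ f = f ∘ φ`. -/
def compOp (φ : ℂ → ℂ) (f : ℂ → ℂ) : ℂ → ℂ := fun z => f (φ z)

/-- The sequence `F` converges to `0` uniformly on compact subsets of the unit disk. -/
def TendstoZeroOnCompacts (F : ℕ → ℂ → ℂ) : Prop :=
  ∀ K : Set ℂ, K ⊆ unitDisk → IsCompact K →
    TendstoUniformlyOn F (fun _ => 0) Filter.atTop K

/-- The operator `T` is bounded from the space with membership predicate `S` and norm `N`
into the Bloch-type space with membership predicate `Tgt` (normed by the Bloch norm). -/
def OpBounded (S : (ℂ → ℂ) → Prop) (N : (ℂ → ℂ) → ℝ) (Tgt : (ℂ → ℂ) → Prop)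
    (T : (ℂ → ℂ) → ℂ → ℂ) : Prop :=
  (∀ f, S f → Tgt (T f)) ∧
  ∃ C : ℝ, 0 < C ∧ ∀ f, S f → blochNorm (T f) ≤ C * N f

/-- The operator `T` is compact: it is bounded and maps bounded sequences converging to `0`
uniformly on compacta to sequences converging to `0` in Bloch norm. -/
def OpCompact (S : (ℂ → ℂ) → Prop) (N : (ℂ → ℂ) → ℝ) (Tgt : (ℂ → ℂ) → Prop)
    (T : (ℂ → ℂ) → ℂ → ℂ) : Prop :=
  OpBounded S N Tgt T ∧
  ∀ F : ℕ → ℂ → ℂ, (∀ n, S (F n)) → (∃ M : ℝ, ∀ n, N (F n) ≤ M) →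
    TendstoZeroOnCompacts F →
    Filter.Tendsto (fun n => blochNorm (T (F n))) Filter.atTop (nhds 0)

/-- `lim_{|φ(z)|→1} E(z) = 0`. -/
def LimPhiBoundaryZero (φ : ℂ → ℂ) (E : ℂ → ℝ) : Prop :=
  ∀ ε : ℝ, 0 < ε → ∃ δ ∈ Set.Ioo (0:ℝ) 1, ∀ z ∈ unitDisk,
    δ < ‖φ z‖ → E z < ε

/-- `lim_{|z|→1} E(z) = 0`. -/
def LimBoundaryZero (E : ℂ → ℝ) : Prop :=
  ∀ ε : ℝ, 0 < ε → ∃ r ∈ Set.Ioo (0:ℝ) 1, ∀ z ∈ unitDisk,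
    r < ‖z‖ → E z < ε

/-!
The normality of `ω` bounds the weight `W(z) = ω(|φ(z)|)(1-|φ(z)|²)^{1/p}` above by `ω(0)` on the
whole disk, and below by a positive constant wherever `|φ(z)| ≤ δ < 1`. The upper bound passes
the vanishing of `(1-|z|²)|u'(z)|/W(z)` on to `(1-|z|²)|u'(z)|`, i.e. gives `u ∈ B₀`; and since `φ`
maps each compact disk `|z| ≤ r` into some `|w| ≤ δ < 1`, `|φ(z)| → 1` forces `|z| → 1`.
Conversely, near the boundary either `|φ(z)| > δ`, or the lower bound on `W` reduces the quotient
to the little Bloch condition.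
-/

open Set

theorem mem_unitDisk {z : ℂ} : z ∈ unitDisk ↔ ‖z‖ < 1 := mem_ball_zero_iff

theorem closedBall_subset_unitDisk {r : ℝ} (hr : r < 1) : Metric.closedBall 0 r ⊆ unitDisk :=
  Metric.closedBall_subset_ball hr

theorem one_sub_norm_sq_nonneg {z : ℂ} (hz : z ∈ unitDisk) : 0 ≤ 1 - ‖z‖ ^ 2 := by
  have := mem_unitDisk.mp hz
  nlinarith [norm_nonneg z]

theorem norm_mem_Ico_of_mem_unitDisk {z : ℂ} (hz : z ∈ unitDisk) : ‖z‖ ∈ Ico (0 : ℝ) 1 :=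
  ⟨norm_nonneg z, mem_unitDisk.mp hz⟩

theorem exists_lt_one_norm_le_of_mapsTo {φ : ℂ → ℂ} (hc : ContinuousOn φ unitDisk)
    (hmaps : MapsTo φ unitDisk unitDisk) {r : ℝ} (hr : r < 1) :
    ∃ δ < 1, ∀ z, ‖z‖ ≤ r → ‖φ z‖ ≤ δ := by
  have hK := closedBall_subset_unitDisk hr
  obtain ⟨a, ha, hle⟩ := (isCompact_closedBall (0 : ℂ) r).exists_forall_le'
    (f := fun z => 1 - ‖φ z‖) (continuousOn_const.sub (hc.mono hK).norm) (a := 0)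
    fun z hz => sub_pos.mpr (mem_unitDisk.mp (hmaps (hK hz)))
  refine ⟨1 - a, by linarith, fun z hz => ?_⟩
  linarith [hle z (mem_closedBall_zero_iff.mpr hz)]

namespace LimBoundaryZero

variable {E F : ℂ → ℝ}

theorem exists_le (h : LimBoundaryZero E) (hc : ContinuousOn E unitDisk) :
    ∃ M, ∀ z ∈ unitDisk, E z ≤ M := by
  obtain ⟨r, hr, hE⟩ := h 1 one_pos
  obtain ⟨C, hC⟩ := (isCompact_closedBall (0 : ℂ) r).exists_bound_of_continuousOn
    (hc.mono (closedBall_subset_unitDisk hr.2))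
  refine ⟨max C 1, fun z hz => ?_⟩
  rcases le_or_gt ‖z‖ r with hzr | hzr
  · exact (le_abs_self _).trans <| (hC z (mem_closedBall_zero_iff.mpr hzr)).trans (le_max_left _ _)
  · exact (hE z hz hzr).le.trans (le_max_right _ _)

theorem of_le_mul (h : LimBoundaryZero F) {C : ℝ} (hC : 0 < C)
    (hle : ∀ z ∈ unitDisk, E z ≤ F z * C) : LimBoundaryZero E := by
  intro ε hε
  obtain ⟨r, hr, hF⟩ := h (ε / C) (div_pos hε hC)
  refine ⟨r, hr, fun z hz hzr => (hle z hz).trans_lt ?_⟩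
  simpa [div_mul_cancel₀ ε hC.ne'] using mul_lt_mul_of_pos_right (hF z hz hzr) hC

theorem limPhiBoundaryZero (h : LimBoundaryZero E) {φ : ℂ → ℂ} (hc : ContinuousOn φ unitDisk)
    (hmaps : MapsTo φ unitDisk unitDisk) : LimPhiBoundaryZero φ E := by
  intro ε hε
  obtain ⟨r, hr, hE⟩ := h ε hε
  obtain ⟨δ, hδ, hφ⟩ := exists_lt_one_norm_le_of_mapsTo hc hmaps hr.2
  refine ⟨max δ r, ⟨lt_max_of_lt_right hr.1, max_lt hδ hr.2⟩, fun z hz hφz => hE z hz ?_⟩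
  by_contra! hzr
  exact (hφ z hzr).not_gt ((le_max_left δ r).trans_lt hφz)

theorem div_comp_of_limPhiBoundaryZero (h : LimBoundaryZero F) {φ : ℂ → ℂ} {g : ℝ → ℝ}
    (hg : ∀ δ ∈ Ioo (0 : ℝ) 1, ∃ c > 0, ∀ r ∈ Icc 0 δ, c ≤ g r)
    (hφ : LimPhiBoundaryZero φ fun z => F z / g ‖φ z‖) :
    LimBoundaryZero fun z => F z / g ‖φ z‖ := by
  intro ε hε
  obtain ⟨δ, hδ, hφδ⟩ := hφ ε hε
  obtain ⟨c, hc, hgc⟩ := hg δ hδ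
  obtain ⟨r, hr, hF⟩ := h (ε * c) (mul_pos hε hc)
  refine ⟨r, hr, fun z hz hzr => ?_⟩
  rcases le_or_gt ‖φ z‖ δ with hφz | hφz
  · have hcg := hgc _ ⟨norm_nonneg _, hφz⟩
    rw [div_lt_iff₀ (hc.trans_le hcg)]
    exact (hF z hz hzr).trans_le (mul_le_mul_of_nonneg_left hcg hε.le)
  · exact hφδ z hz hφz

end LimBoundaryZero

theorem memLittleBloch_iff {f : ℂ → ℂ} :
    MemLittleBloch f ↔ DifferentiableOn ℂ f unitDisk ∧
      LimBoundaryZero fun z => (1 - ‖z‖ ^ 2) * ‖deriv f z‖ := by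
  refine ⟨fun h => ⟨h.1.1, h.2⟩, fun ⟨hf, h⟩ => ⟨⟨hf, h.exists_le ?_⟩, h⟩⟩
  exact (continuousOn_const.sub (continuous_norm.pow 2).continuousOn).mul
    (hf.deriv Metric.isOpen_ball).continuousOn.norm

namespace IsNormal

variable {ω : ℝ → ℝ}

theorem continuousOn (hω : IsNormal ω) : ContinuousOn ω (Ico 0 1) := by
  obtain ⟨s, t, -, -, hc, -⟩ := hω
  exact hc

theorem pos (hω : IsNormal ω) {r : ℝ} (hr : r ∈ Ico (0 : ℝ) 1) : 0 < ω r := by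
  obtain ⟨s, t, -, -, -, hpos, -⟩ := hω
  exact hpos r hr

theorem le_apply_zero (hω : IsNormal ω) {r : ℝ} (hr : r ∈ Ico (0 : ℝ) 1) : ω r ≤ ω 0 := by
  obtain ⟨s, t, hs, -, -, hpos, hdec, -⟩ := hω
  have h1r : 0 < 1 - r := by linarith [hr.2]
  have hdiv := hdec 0 ⟨le_rfl, one_pos⟩ r hr hr.1
  rw [sub_zero, Real.one_rpow, div_one, div_le_iff₀ (Real.rpow_pos_of_pos h1r s)] at hdiv
  exact hdiv.trans <| mul_le_of_le_one_right (hpos 0 ⟨le_rfl, one_pos⟩).le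
    (Real.rpow_le_one h1r.le (by linarith [hr.1]) hs.le)

variable {p : ℝ}

theorem weight_pos (hω : IsNormal ω) {r : ℝ} (hr : r ∈ Ico (0 : ℝ) 1) :
    0 < ω r * (1 - r ^ 2) ^ (1 / p) :=
  mul_pos (hω.pos hr) (Real.rpow_pos_of_pos (by nlinarith [hr.1, hr.2]) _)

theorem weight_le (hω : IsNormal ω) (hp : 0 < p) {r : ℝ} (hr : r ∈ Ico (0 : ℝ) 1) :
    ω r * (1 - r ^ 2) ^ (1 / p) ≤ ω 0 :=
  (mul_le_of_le_one_right (hω.pos hr).le (Real.rpow_le_one (by nlinarith [hr.1, hr.2])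
    (by nlinarith [hr.1]) (by positivity))).trans (hω.le_apply_zero hr)

theorem exists_pos_le_weight (hω : IsNormal ω) (hp : 0 < p) :
    ∀ δ ∈ Ioo (0 : ℝ) 1, ∃ c > 0, ∀ r ∈ Icc 0 δ, c ≤ ω r * (1 - r ^ 2) ^ (1 / p) := by
  intro δ hδ
  have hsub : Icc 0 δ ⊆ Ico (0 : ℝ) 1 := Icc_subset_Ico_right hδ.2
  obtain ⟨m, hm, hωm⟩ := isCompact_Icc.exists_forall_le' (hω.continuousOn.mono hsub) (a := 0)
    fun r hr => hω.pos (hsub hr)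
  have hδ2 : 0 < 1 - δ ^ 2 := by nlinarith [hδ.1, hδ.2]
  refine ⟨m * (1 - δ ^ 2) ^ (1 / p), mul_pos hm (Real.rpow_pos_of_pos hδ2 _), fun r hr => ?_⟩
  exact mul_le_mul (hωm r hr) (Real.rpow_le_rpow hδ2.le (by nlinarith [hr.1, hr.2])
    (by positivity)) (Real.rpow_pos_of_pos hδ2 _).le (hω.pos (hsub hr)).le

end IsNormal

/-- Lemma 4.2: `lim_{|z|→1}` of the first quantity vanishes iff `lim_{|φ(z)|→1}` vanishes
and `u ∈ B₀`. -/
theorem lim_boundary_deriv_u_iff (p : ℝ) (hp : 0 < p) (ω : ℝ → ℝ) (hω : IsNormal ω)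
    (φ u : ℂ → ℂ) (hφ : IsAnalyticSelfMap φ) (hu : DifferentiableOn ℂ u unitDisk) :
    LimBoundaryZero (fun z =>
        (1 - ‖z‖ ^ 2) * ‖deriv u z‖ /
          (ω (‖φ z‖) * (1 - ‖φ z‖ ^ 2) ^ (1 / p))) ↔
      (LimPhiBoundaryZero φ (fun z =>
          (1 - ‖z‖ ^ 2) * ‖deriv u z‖ /
            (ω (‖φ z‖) * (1 - ‖φ z‖ ^ 2) ^ (1 / p))) ∧
       MemLittleBloch u) := by
  have hφD : ∀ z ∈ unitDisk, ‖φ z‖ ∈ Ico (0 : ℝ) 1 :=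
    fun z hz => norm_mem_Ico_of_mem_unitDisk (hφ.2 hz)
  rw [memLittleBloch_iff]
  constructor
  · intro h
    refine ⟨h.limPhiBoundaryZero hφ.1.continuousOn hφ.2, hu,
      h.of_le_mul (hω.pos ⟨le_rfl, one_pos⟩) fun z hz => ?_⟩
    rw [div_mul_eq_mul_div, le_div_iff₀ (hω.weight_pos (hφD z hz))]
    exact mul_le_mul_of_nonneg_left (hω.weight_le hp (hφD z hz))
      (mul_nonneg (one_sub_norm_sq_nonneg hz) (norm_nonneg _))
  · rintro ⟨hφlim, -, hN⟩
    exact hN.div_comp_of_limPhiBoundaryZero (g := fun r => ω r * (1 - r ^ 2) ^ (1 / p))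
      (hω.exists_pos_le_weight hp) hφlim
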